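/- arXiv:1602.07854 — 6 statements merged into one kernel-verified Lean document; each statement's English description precedes it below -/
import Mathlib

section
/- For all real x ≥ 2, Γ(x)/Γ(x - 1/2) > √x / 2. -/
theorem gamma_quotient_gt (x : ℝ) (hx : 2 ≤ x) :
    Real.Gamma x / Real.Gamma (x - 1/2) > Real.sqrt x / 2 := by
  have h1 : (0:ℝ) < x - 1 := by linarith
  have h2 : (0:ℝ) < x - 1/2 := by linarith
  have h3 : (0:ℝ) < x := by linarith
  have G1 : 0 < Real.Gamma (x - 1) := Real.Gamma_pos_of_pos h1
  have G2 : 0 < Real.Gamma (x - 1/2) := Real.Gamma_pos_of_pos h2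
  have G3 : 0 < Real.Gamma x := Real.Gamma_pos_of_pos h3
  -- log-convexity
  have key : Real.Gamma (x - 1/2) ≤ Real.Gamma (x - 1) ^ ((1:ℝ)/2) * Real.Gamma x ^ ((1:ℝ)/2) := by
    have := Real.Gamma_mul_add_mul_le_rpow_Gamma_mul_rpow_Gamma h1 h3
      (by norm_num : (0:ℝ) < 1/2) (by norm_num : (0:ℝ) < 1/2) (by norm_num)
    have e : (1/2 : ℝ) * (x - 1) + (1/2 : ℝ) * x = x - 1/2 := by ring
    rwa [e] at this
  have keysq : Real.Gamma (x - 1/2) ^ 2 ≤ Real.Gamma (x - 1) * Real.Gamma x := by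
    have := pow_le_pow_left₀ G2.le key 2
    calc Real.Gamma (x - 1/2) ^ 2 ≤ (Real.Gamma (x - 1) ^ ((1:ℝ)/2) * Real.Gamma x ^ ((1:ℝ)/2)) ^ 2 := this
      _ = Real.Gamma (x - 1) * Real.Gamma x := by
          rw [mul_pow, ← Real.rpow_natCast (Real.Gamma (x-1) ^ ((1:ℝ)/2)),
            ← Real.rpow_natCast (Real.Gamma x ^ ((1:ℝ)/2)),
            ← Real.rpow_mul G1.le, ← Real.rpow_mul G3.le]
          norm_num
  -- Γ x = (x-1) Γ (x-1)
  have hrec : Real.Gamma x = (x - 1) * Real.Gamma (x - 1) := by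
    have := Real.Gamma_add_one (s := x - 1) (by positivity)
    simpa using this
  -- square of the quotient is ≥ x - 1
  have hq : Real.sqrt (x - 1) ≤ Real.Gamma x / Real.Gamma (x - 1/2) := by
    rw [show Real.sqrt (x-1) = Real.sqrt (x-1) from rfl]
    rw [le_div_iff₀ G2]
    rw [← Real.sqrt_sq G2.le]
    calc Real.sqrt (x-1) * Real.sqrt (Real.Gamma (x - 1/2) ^ 2)
        = Real.sqrt ((x-1) * Real.Gamma (x-1/2)^2) := (Real.sqrt_mul h1.le _).symm
      _ ≤ Real.sqrt ((x-1) * (Real.Gamma (x-1) * Real.Gamma x)) := by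
          apply Real.sqrt_le_sqrt; nlinarith [keysq]
      _ = Real.sqrt (Real.Gamma x ^ 2) := by rw [hrec]; ring_nf
      _ = Real.Gamma x := Real.sqrt_sq G3.le
  have hlt : Real.sqrt x / 2 < Real.sqrt (x - 1) := by
    rw [div_lt_iff₀ (by norm_num : (0:ℝ) < 2)]
    have : Real.sqrt x < Real.sqrt (x - 1) * 2 := by
      rw [← Real.sqrt_sq (by positivity : (0:ℝ) ≤ Real.sqrt (x-1) * 2)]
      apply Real.sqrt_lt_sqrt h3.le
      rw [mul_pow, Real.sq_sqrt h1.le]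
      nlinarith
    linarith
  exact lt_of_lt_of_le hlt hq
end

section
/- For every natural number m ≥ 5, (Γ(m/2 + 1)^2 · Γ(m)) / (Γ(m/2 + 1/2)^2 · Γ(m + 1/2)) ≤ ((m+2)/(m+1)) · √m / 2. -/
open Real

noncomputable def Fg (x : ℝ) : ℝ :=
  (Real.Gamma (x/2 + 1))^2 * Real.Gamma x / ((Real.Gamma (x/2 + 1/2))^2 * Real.Gamma (x + 1/2))

noncomputable def Gg (x : ℝ) : ℝ := (x + 2) / (x + 1) * Real.sqrt x / 2

lemma le_of_sq_le_sq'' {a b : ℝ} (ha : 0 ≤ a) (hb : 0 ≤ b) (h : a^2 ≤ b^2) : a ≤ b := by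
  nlinarith

lemma mul_sqrt_le {a b u v : ℝ} (ha : 0 ≤ a) (hb : 0 ≤ b) (hu : 0 ≤ u) (hv : 0 ≤ v)
    (h : a^2*u ≤ b^2*v) : a * Real.sqrt u ≤ b * Real.sqrt v := by
  apply le_of_sq_le_sq'' (by positivity) (by positivity)
  rw [mul_pow, mul_pow, Real.sq_sqrt hu, Real.sq_sqrt hv]
  exact h

lemma gamma_sq_half {x : ℝ} (hx : 0 < x) :
    (Real.Gamma (x + 1/2))^2 ≤ x * (Real.Gamma x)^2 := by
  have hx1 : (0:ℝ) < x + 1 := by linarith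
  have h := Real.convexOn_log_Gamma.2 (Set.mem_Ioi.mpr hx) (Set.mem_Ioi.mpr hx1)
    (by norm_num : (0:ℝ) ≤ 1/2) (by norm_num : (0:ℝ) ≤ 1/2) (by norm_num)
  simp only [Function.comp_apply, smul_eq_mul] at h
  have e : (1/2 : ℝ) * x + (1/2 : ℝ) * (x+1) = x + 1/2 := by ring
  rw [e] at h
  have hpa : 0 < Real.Gamma (x + 1/2) := Real.Gamma_pos_of_pos (by linarith)
  have hpb : 0 < Real.Gamma x := Real.Gamma_pos_of_pos hx
  have hpc : 0 < Real.Gamma (x+1) := Real.Gamma_pos_of_pos hx1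
  have h2 : Real.log ((Real.Gamma (x+1/2))^2) ≤ Real.log (Real.Gamma x * Real.Gamma (x+1)) := by
    rw [Real.log_pow, Real.log_mul (ne_of_gt hpb) (ne_of_gt hpc)]
    push_cast
    linarith
  have h3 : (Real.Gamma (x+1/2))^2 ≤ Real.Gamma x * Real.Gamma (x+1) :=
    (Real.log_le_log_iff (by positivity) (by positivity)).mp h2
  rw [Real.Gamma_add_one (ne_of_gt hx)] at h3
  nlinarith

lemma Fg_pos {x : ℝ} (hx : 0 < x) : 0 < Fg x := by
  have g1 : 0 < Real.Gamma (x/2+1/2) := Real.Gamma_pos_of_pos (by linarith)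
  have g2 : 0 < Real.Gamma (x+1/2) := Real.Gamma_pos_of_pos (by linarith)
  have g3 : 0 < Real.Gamma x := Real.Gamma_pos_of_pos hx
  have g4 : 0 < Real.Gamma (x/2+1) := Real.Gamma_pos_of_pos (by linarith)
  unfold Fg
  positivity

lemma Gg_pos {x : ℝ} (hx : 0 < x) : 0 < Gg x := by
  have hs : 0 < Real.sqrt x := Real.sqrt_pos.mpr hx
  unfold Gg
  have h1 : (0:ℝ) < x + 2 := by linarith
  have h2 : (0:ℝ) < x + 1 := by linarith
  positivity

lemma F_upper {x : ℝ} (hx : 1 ≤ x) : Fg x ≤ (x+1)/(2*Real.sqrt (x-1/2)) := by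
  have h05 : (0:ℝ) < x - 1/2 := by linarith
  have hs : 0 < Real.sqrt (x-1/2) := Real.sqrt_pos.mpr h05
  have g1 : 0 < Real.Gamma (x/2+1/2) := Real.Gamma_pos_of_pos (by linarith)
  have g2 : 0 < Real.Gamma (x+1/2) := Real.Gamma_pos_of_pos (by linarith)
  have g3 : 0 < Real.Gamma x := Real.Gamma_pos_of_pos (by linarith)
  have g4 : 0 < Real.Gamma (x/2+1) := Real.Gamma_pos_of_pos (by linarith)
  have h1 : (Real.Gamma (x/2+1))^2 ≤ (x/2+1/2) * (Real.Gamma (x/2+1/2))^2 := by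
    have hh := gamma_sq_half (x := x/2+1/2) (by linarith)
    have e : x/2 + 1/2 + 1/2 = x/2 + 1 := by ring
    rwa [e] at hh
  have h2 : Real.sqrt (x-1/2) * Real.Gamma x ≤ Real.Gamma (x+1/2) := by
    have hh := gamma_sq_half (x := x - 1/2) h05
    have e : x - 1/2 + 1/2 = x := by ring
    rw [e] at hh
    have hg : Real.Gamma (x+1/2) = (x-1/2) * Real.Gamma (x-1/2) := by
      have e2 : x + 1/2 = (x - 1/2) + 1 := by ring
      rw [e2, Real.Gamma_add_one (ne_of_gt h05)]
    have g5 : 0 < Real.Gamma (x-1/2) := Real.Gamma_pos_of_pos h05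
    apply le_of_sq_le_sq'' (by positivity) g2.le
    rw [mul_pow, Real.sq_sqrt h05.le, hg]
    nlinarith
  unfold Fg
  rw [div_le_div_iff₀ (by positivity) (by positivity)]
  calc (Real.Gamma (x/2+1))^2 * Real.Gamma x * (2*Real.sqrt (x-1/2))
      ≤ ((x/2+1/2) * (Real.Gamma (x/2+1/2))^2) * Real.Gamma x * (2*Real.sqrt (x-1/2)) := by
        apply mul_le_mul_of_nonneg_right (mul_le_mul_of_nonneg_right h1 g3.le) (by positivity)
    _ = (x+1) * ((Real.Gamma (x/2+1/2))^2 * (Real.sqrt (x-1/2) * Real.Gamma x)) := by ring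
    _ ≤ (x+1) * ((Real.Gamma (x/2+1/2))^2 * Real.Gamma (x+1/2)) := by
        apply mul_le_mul_of_nonneg_left (mul_le_mul_of_nonneg_left h2 (by positivity)) (by linarith)

lemma key_poly {x : ℝ} (hx : 5 ≤ x) :
    (x+4)^2*(x+2)*(x+1)^4*(x+1/2)^2*(x+3/2)^2 ≤ (x+3)^2*(x+2)^6*x^3 := by
  have h : 0 ≤ x - 5 := by linarith
  nlinarith [pow_nonneg h 2, pow_nonneg h 3, pow_nonneg h 4, pow_nonneg h 5,
    pow_nonneg h 6, pow_nonneg h 7, pow_nonneg h 8, pow_nonneg h 9, h]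

lemma step_ineq {x : ℝ} (hx : 5 ≤ x) :
    Gg (x+2) ≤ (x+2)^2*x/((x+1)*(x+1/2)*(x+3/2)) * Gg x := by
  have hx0 : (0:ℝ) < x := by linarith
  unfold Gg
  have e1 : (x+2+2)/(x+2+1) * Real.sqrt (x+2) / 2 = ((x+4)/(2*(x+3))) * Real.sqrt (x+2) := by
    rw [show x+2+2 = x+4 by ring, show x+2+1 = x+3 by ring]
    have h3 : (x:ℝ)+3 ≠ 0 := by positivity
    field_simp
  have e2 : (x+2)^2*x/((x+1)*(x+1/2)*(x+3/2)) * ((x+2)/(x+1) * Real.sqrt x / 2)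
      = ((x+2)^3*x/(2*(x+1)^2*(x+1/2)*(x+3/2))) * Real.sqrt x := by
    field_simp
  rw [e1, e2]
  apply mul_sqrt_le (by positivity) (by positivity) (by linarith) (by linarith)
  rw [div_pow, div_pow, div_mul_eq_mul_div, div_mul_eq_mul_div,
    div_le_div_iff₀ (by positivity) (by positivity)]
  nlinarith [key_poly hx]

lemma F_step {x : ℝ} (hx : 0 < x) :
    Fg (x+2) = (x+2)^2*x/((x+1)*(x+1/2)*(x+3/2)) * Fg x := by
  have g1 : 0 < Real.Gamma (x/2+1/2) := Real.Gamma_pos_of_pos (by linarith)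
  have g2 : 0 < Real.Gamma (x+1/2) := Real.Gamma_pos_of_pos (by linarith)
  have g3 : 0 < Real.Gamma x := Real.Gamma_pos_of_pos hx
  have g4 : 0 < Real.Gamma (x/2+1) := Real.Gamma_pos_of_pos (by linarith)
  have G1 : Real.Gamma ((x+2)/2 + 1) = (x/2+1) * Real.Gamma (x/2+1) := by
    rw [show (x+2)/2 + 1 = (x/2+1)+1 by ring, Real.Gamma_add_one (by positivity)]
  have G2 : Real.Gamma ((x+2)/2 + 1/2) = (x/2+1/2) * Real.Gamma (x/2+1/2) := by
    rw [show (x+2)/2 + 1/2 = (x/2+1/2)+1 by ring, Real.Gamma_add_one (by positivity)]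
  have G3 : Real.Gamma (x+2) = (x+1)*(x*Real.Gamma x) := by
    rw [show x+2 = (x+1)+1 by ring, Real.Gamma_add_one (by positivity),
      Real.Gamma_add_one (ne_of_gt hx)]
  have G4 : Real.Gamma ((x+2)+1/2) = ((x+1/2)+1)*((x+1/2) * Real.Gamma (x+1/2)) := by
    rw [show (x+2)+1/2 = ((x+1/2)+1)+1 by ring, Real.Gamma_add_one (by positivity),
      Real.Gamma_add_one (by positivity)]
  unfold Fg
  rw [G1, G2, G3, G4]
  have h1 : (x:ℝ)+1 ≠ 0 := by positivity
  have h2 : (x:ℝ)+1/2 ≠ 0 := by positivity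
  have h3 : (x:ℝ)+3/2 ≠ 0 := by positivity
  field_simp
  ring

lemma mono_step {x : ℝ} (hx : 5 ≤ x) : Fg x / Gg x ≤ Fg (x+2) / Gg (x+2) := by
  have hx0 : (0:ℝ) < x := by linarith
  have hG : 0 < Gg x := Gg_pos hx0
  have hG2 : 0 < Gg (x+2) := Gg_pos (by linarith)
  have hF : 0 < Fg x := Fg_pos hx0
  rw [div_le_div_iff₀ hG hG2, F_step hx0]
  calc Fg x * Gg (x+2) ≤ Fg x * ((x+2)^2*x/((x+1)*(x+1/2)*(x+3/2)) * Gg x) :=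
        mul_le_mul_of_nonneg_left (step_ineq hx) hF.le
    _ = (x+2)^2*x/((x+1)*(x+1/2)*(x+3/2)) * Fg x * Gg x := by ring

lemma ratio_le {x : ℝ} (hx : 5 ≤ x) : Fg x / Gg x ≤ 1 + 1/x := by
  have hx0 : (0:ℝ) < x := by linarith
  have h05 : (0:ℝ) < x - 1/2 := by linarith
  have hG : 0 < Gg x := Gg_pos hx0
  rw [div_le_iff₀ hG]
  have hs : 0 < Real.sqrt (x-1/2) := Real.sqrt_pos.mpr h05
  calc Fg x ≤ (x+1)/(2*Real.sqrt (x-1/2)) := F_upper (by linarith)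
    _ ≤ (1+1/x) * Gg x := by
        have e : (x+1)/(2*Real.sqrt (x-1/2)) = ((x+1)/(2*(x-1/2))) * Real.sqrt (x-1/2) := by
          rw [div_mul_eq_mul_div, div_eq_div_iff (by positivity) (by positivity)]
          have hss : Real.sqrt (x-1/2) * Real.sqrt (x-1/2) = x - 1/2 :=
            Real.mul_self_sqrt h05.le
          nlinarith [hss]
        have e2 : (1+1/x) * Gg x = ((x+2)/(2*x)) * Real.sqrt x := by
          unfold Gg
          field_simp
        rw [e, e2]
        apply mul_sqrt_le (by positivity) (by positivity) (by linarith) hx0.le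
        rw [div_pow, div_pow, div_mul_eq_mul_div, div_mul_eq_mul_div,
          div_le_div_iff₀ (by positivity) (by positivity)]
        nlinarith [mul_pos (mul_pos hx0 h05) (show (0:ℝ) < 3/2*x^2+x-1/2 by nlinarith)]

theorem gamma_quotient_le (m : ℕ) (hm : 5 ≤ m) :
    (Real.Gamma ((m : ℝ)/2 + 1))^2 * Real.Gamma (m : ℝ) /
      ((Real.Gamma ((m : ℝ)/2 + 1/2))^2 * Real.Gamma ((m : ℝ) + 1/2)) ≤
    ((m : ℝ) + 2) / ((m : ℝ) + 1) * Real.sqrt (m : ℝ) / 2 := by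
  have hx : (5:ℝ) ≤ (m:ℝ) := by exact_mod_cast hm
  set x : ℝ := (m:ℝ) with hxdef
  have hx0 : (0:ℝ) < x := by linarith
  have chain : ∀ k : ℕ, Fg x / Gg x ≤ Fg (x+2*k) / Gg (x+2*k) := by
    intro k
    induction k with
    | zero => simp
    | succ n ih =>
      have hn : (0:ℝ) ≤ (n:ℝ) := Nat.cast_nonneg n
      have h5 : (5:ℝ) ≤ x + 2*n := by linarith
      have e : x + 2*((n:ℕ)+1:ℕ) = (x+2*n) + 2 := by push_cast; ring
      rw [e]
      exact ih.trans (mono_step h5)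
  have hle : ∀ k : ℕ, Fg x / Gg x ≤ 1 + 1/(x+2*k) := by
    intro k
    have hn : (0:ℝ) ≤ (k:ℝ) := Nat.cast_nonneg k
    exact (chain k).trans (ratio_le (by linarith))
  have h1 : Fg x / Gg x ≤ 1 := by
    by_contra hc
    push_neg at hc
    have hd : 0 < Fg x / Gg x - 1 := by linarith
    obtain ⟨k, hk⟩ := exists_nat_gt (1/(Fg x / Gg x - 1))
    have hn : (0:ℝ) ≤ (k:ℝ) := Nat.cast_nonneg k
    have hxk : (0:ℝ) < x + 2*k := by linarith
    have h2 : 1/(x+2*k) < Fg x/Gg x - 1 := by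
      rw [div_lt_iff₀ hxk]
      have h3 : 1 < (Fg x / Gg x - 1) * k := by
        rw [div_lt_iff₀ hd] at hk
        linarith
      nlinarith
    linarith [hle k]
  have hG : 0 < Gg x := Gg_pos hx0
  have := (div_le_one hG).mp h1
  exact this
end

section
/- Let r > 0 and define A(α) on [0,1] by: A(α) = π r² / √(1-α²) for 0 ≤ α ≤ 1/√(1+4r²); A(α) = (r/α)·√(1 - (1-α²)/(4α²r²)) + (2r²/√(1-α²))·arcsin(√(1-α²)/(2αr)) for 1/√(1+4r²) < α < 1; A(1) = 2r. Then A(α) equals the 2-dimensional volume of the intersection of the cylinder Z = [-1/2, 1/2] × r·B₂² ⊂ ℝ³ with the hyperplane through the origin orthogonal to (√(1-α²), α, 0). -/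
/-!
With `β = √(1 - α²)`, the map `p ↦ (α p₀, -β p₀, p₁)` is a linear isometry of `ℝ²` onto the
hyperplane, and any other isometric parametrization differs from it by an isometry of `ℝ²`, which
preserves area. In these coordinates the section is the slab `|α s| ≤ 1/2` cut out of the ellipse
`(β s)² + t² ≤ r²`, whose area is `∫ 2 √(r² - (β s)²) ds` over the slab (Cavalieri).
If `2 α r ≤ β` the slab contains the whole ellipse, of area `π r² / β`; otherwise the integral
runs over `|s| ≤ 1 / (2α)` and is evaluated with the primitive `x √(c² - x²) + c² arcsin (x / c)`
of `2 √(c² - x²)`.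
-/

open MeasureTheory Set Real

theorem volume_setOf_sq_le (c : ℝ) : volume {t : ℝ | t ^ 2 ≤ c} = ENNReal.ofReal (2 * √c) := by
  rcases le_or_gt 0 c with hc | hc
  · have hIcc : {t : ℝ | t ^ 2 ≤ c} = Icc (-√c) √c := by
      ext t
      rw [mem_ofPred_eq, mem_Icc, ← abs_le, ← sqrt_le_sqrt_iff hc, sqrt_sq_eq_abs]
    rw [hIcc, volume_Icc]
    ring_nf
  · have hempty : {t : ℝ | t ^ 2 ≤ c} = ∅ :=
      eq_empty_of_forall_notMem fun t ht => (sq_nonneg t).not_gt (ht.trans_lt hc)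
    rw [hempty, measure_empty, sqrt_eq_zero_of_nonpos hc.le, mul_zero, ENNReal.ofReal_zero]

theorem volume_setOf_fst_mem_and_sq_le {I : Set ℝ} (hI : MeasurableSet I) {f : ℝ → ℝ}
    (hf : Measurable f) :
    volume {q : ℝ × ℝ | q.1 ∈ I ∧ q.2 ^ 2 ≤ f q.1} = ∫⁻ s in I, ENNReal.ofReal (2 * √(f s)) := by
  have hmeas : MeasurableSet {q : ℝ × ℝ | q.1 ∈ I ∧ q.2 ^ 2 ≤ f q.1} :=
    (measurable_fst hI).inter (measurableSet_le (by fun_prop) (hf.comp measurable_fst))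
  rw [Measure.volume_eq_prod, Measure.prod_apply hmeas, ← lintegral_indicator hI]
  congr 1 with s
  by_cases hs : s ∈ I
  · simp [hs, volume_setOf_sq_le]
  · simp [hs]

theorem hasDerivAt_mul_sqrt_sq_sub_sq_add_arcsin {c x : ℝ} (hx : |x| < c) :
    HasDerivAt (fun x => x * √(c ^ 2 - x ^ 2) + c ^ 2 * arcsin (x / c))
      (2 * √(c ^ 2 - x ^ 2)) x := by
  have hc : 0 < c := (abs_nonneg x).trans_lt hx
  have hpos : 0 < c ^ 2 - x ^ 2 := by nlinarith [sq_abs x, abs_nonneg x]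
  obtain ⟨h₁, h₂⟩ := abs_lt.mp (show |x / c| < 1 by rwa [abs_div, abs_of_pos hc, div_lt_one hc])
  have hsqrt : HasDerivAt (fun x => √(c ^ 2 - x ^ 2)) (-(2 * x) / (2 * √(c ^ 2 - x ^ 2))) x := by
    simpa using ((hasDerivAt_pow 2 x).const_sub (c ^ 2)).sqrt hpos.ne'
  have harcsin := (hasDerivAt_arcsin h₁.ne' h₂.ne).comp x ((hasDerivAt_id x).div_const c)
  refine (((hasDerivAt_id x).mul hsqrt).add (harcsin.const_mul (c ^ 2))).congr_deriv ?_
  have hs : √(1 - (x / c) ^ 2) = √(c ^ 2 - x ^ 2) / c := by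
    rw [← sqrt_sq hc.le, ← sqrt_div' _ (sq_nonneg c), sqrt_sq hc.le]
    congr 1
    field_simp
  have hne : √(c ^ 2 - x ^ 2) ≠ 0 := (sqrt_pos.mpr hpos).ne'
  rw [hs, id_eq]
  field_simp
  rw [sq_sqrt hpos.le]
  ring

theorem integral_two_mul_sqrt_sq_sub_sq {a c : ℝ} (ha : 0 ≤ a) (hac : a ≤ c) :
    ∫ x in -a..a, 2 * √(c ^ 2 - x ^ 2) =
      2 * a * √(c ^ 2 - a ^ 2) + 2 * c ^ 2 * arcsin (a / c) := by
  rw [intervalIntegral.integral_eq_sub_of_hasDerivAt_of_le (neg_le_self ha) (by fun_prop)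
    (fun x hx => hasDerivAt_mul_sqrt_sq_sub_sq_add_arcsin ((abs_lt.mpr hx).trans_le hac))
    ((by fun_prop : Continuous fun x : ℝ => 2 * √(c ^ 2 - x ^ 2)).intervalIntegrable _ _)]
  rw [neg_div, arcsin_neg, neg_sq]
  ring

theorem setLIntegral_Icc_two_mul_sqrt_sq_sub_sq {k c b : ℝ} (hk : 0 < k) (hb : 0 ≤ b)
    (hbc : k * b ≤ c) :
    ∫⁻ s in Icc (-b) b, ENNReal.ofReal (2 * √(c ^ 2 - (k * s) ^ 2)) =
      ENNReal.ofReal (2 * b * √(c ^ 2 - (k * b) ^ 2) + 2 * c ^ 2 / k * arcsin (k * b / c)) := by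
  have hcont : Continuous fun s => 2 * √(c ^ 2 - (k * s) ^ 2) := by fun_prop
  rw [← ofReal_integral_eq_lintegral_ofReal hcont.integrableOn_Icc
      (ae_of_all _ fun s => by positivity),
    integral_Icc_eq_integral_Ioc, ← intervalIntegral.integral_of_le (neg_le_self hb),
    intervalIntegral.integral_comp_mul_left (fun x => 2 * √(c ^ 2 - x ^ 2)) hk.ne', mul_neg,
    integral_two_mul_sqrt_sq_sub_sq (mul_nonneg hk.le hb) hbc, smul_eq_mul]
  congr 1
  field_simp

theorem support_ofReal_two_mul_sqrt_sq_sub_sq_subset {k c : ℝ} (hk : 0 < k) (hc : 0 ≤ c) :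
    Function.support (fun s => ENNReal.ofReal (2 * √(c ^ 2 - (k * s) ^ 2))) ⊆
      Icc (-(c / k)) (c / k) := by
  intro s hs
  have hpos : 0 < c ^ 2 - (k * s) ^ 2 := by simpa using hs
  rw [mem_Icc, ← abs_le, le_div_iff₀ hk, mul_comm, ← abs_of_pos hk, ← abs_mul]
  exact (abs_lt_of_sq_lt_sq (by linarith) hc).le

theorem LinearIsometry.volume_preimage_eq_of_range_eq {E F : Type*}
    [NormedAddCommGroup E] [InnerProductSpace ℝ E] [FiniteDimensional ℝ E]
    [MeasurableSpace E] [BorelSpace E] [NormedAddCommGroup F] [InnerProductSpace ℝ F]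
    {φ ψ : E →ₗᵢ[ℝ] F} (h : range φ = range ψ) (s : Set F) :
    volume (φ ⁻¹' s) = volume (ψ ⁻¹' s) := by
  have hrange : LinearMap.range φ.toLinearMap = LinearMap.range ψ.toLinearMap :=
    SetLike.coe_injective h
  let e : E ≃ₗᵢ[ℝ] E :=
    φ.equivRange.trans ((LinearIsometryEquiv.ofEq _ _ hrange).trans ψ.equivRange.symm)
  have he : ∀ x, ψ (e x) = φ x := fun x =>
    congrArg Subtype.val (ψ.equivRange.apply_symm_apply _)
  have hpre : φ ⁻¹' s = e ⁻¹' (ψ ⁻¹' s) := by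
    ext x
    simp only [mem_preimage, he]
  rw [hpre]
  exact e.measurePreserving.measure_preimage_equiv (f := e.toMeasurableEquiv) _

def slabEllipse (α β r : ℝ) : Set (ℝ × ℝ) :=
  {q | α * q.1 ∈ Icc (-(1 : ℝ) / 2) (1 / 2) ∧ (β * q.1) ^ 2 + q.2 ^ 2 ≤ r ^ 2}

noncomputable def sectionIsometry (α β : ℝ) (h : α ^ 2 + β ^ 2 = 1) :
    EuclideanSpace ℝ (Fin 2) →ₗᵢ[ℝ] EuclideanSpace ℝ (Fin 3) where
  toFun p := !₂[α * p 0, -(β * p 0), p 1]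
  map_add' p q := by
    ext i
    fin_cases i <;>
      simp only [PiLp.add_apply, Fin.zero_eta, Fin.mk_one, Fin.reduceFinMk, Matrix.cons_val_zero,
        Matrix.cons_val_one, Matrix.cons_val] <;> ring
  map_smul' c p := by
    ext i
    fin_cases i <;>
      simp only [PiLp.smul_apply, smul_eq_mul, Fin.zero_eta, Fin.mk_one, Fin.reduceFinMk,
        Matrix.cons_val_zero, Matrix.cons_val_one, Matrix.cons_val, RingHom.id_apply] <;> ring
  norm_map' p := by
    simp only [EuclideanSpace.norm_eq, Fin.sum_univ_three, Fin.sum_univ_two, Real.norm_eq_abs,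
      sq_abs]
    show √((α * p 0) ^ 2 + (-(β * p 0)) ^ 2 + p 1 ^ 2) = √(p 0 ^ 2 + p 1 ^ 2)
    congr 1
    linear_combination (p 0) ^ 2 * h

theorem range_sectionIsometry (α β : ℝ) (h : α ^ 2 + β ^ 2 = 1) :
    range (sectionIsometry α β h) = {x | β * x 0 + α * x 1 = 0} := by
  ext x
  constructor
  · rintro ⟨p, rfl⟩
    show β * (α * p 0) + α * -(β * p 0) = 0
    ring
  · intro (hx : β * x 0 + α * x 1 = 0)
    refine ⟨!₂[α * x 0 - β * x 1, x 2], ?_⟩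
    ext i
    fin_cases i
    · show α * (α * x 0 - β * x 1) = x 0
      linear_combination (-β) * hx + x 0 * h
    · show -(β * (α * x 0 - β * x 1)) = x 1
      linear_combination (-α) * hx + x 1 * h
    · rfl

theorem volume_preimage_sectionIsometry (α β : ℝ) (h : α ^ 2 + β ^ 2 = 1) (r : ℝ) :
    volume (sectionIsometry α β h ⁻¹'
        {x : EuclideanSpace ℝ (Fin 3) | x 0 ∈ Icc (-(1:ℝ)/2) (1/2) ∧ x 1 ^ 2 + x 2 ^ 2 ≤ r ^ 2}) =
      volume (slabEllipse α β r) := by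
  rw [← ((EuclideanSpace.volume_preserving_symm_measurableEquiv_toLp (Fin 2)).trans
    (volume_preserving_finTwoArrow ℝ)).measure_preimage_equiv]
  congr 1 with p
  show _ ∧ (-(β * p 0)) ^ 2 + p 1 ^ 2 ≤ r ^ 2 ↔ _
  rw [neg_sq]
  rfl

theorem volume_slabEllipse_eq_setLIntegral (α β r : ℝ) :
    volume (slabEllipse α β r) =
      ∫⁻ s in (α * ·) ⁻¹' Icc (-(1 : ℝ) / 2) (1 / 2),
        ENNReal.ofReal (2 * √(r ^ 2 - (β * s) ^ 2)) := by
  rw [← volume_setOf_fst_mem_and_sq_le (measurableSet_Icc.preimage (by fun_prop)) (by fun_prop)]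
  simp only [slabEllipse, le_sub_iff_add_le', mem_preimage]

theorem volume_slabEllipse_of_le {α β r : ℝ} (hα : 0 ≤ α) (hβ : 0 < β) (hr : 0 < r)
    (h : 2 * α * r ≤ β) : volume (slabEllipse α β r) = ENNReal.ofReal (π * r * (r / β)) := by
  have hsupp := support_ofReal_two_mul_sqrt_sq_sub_sq_subset hβ hr.le
  have hsub : Icc (-(r / β)) (r / β) ⊆ (α * ·) ⁻¹' Icc (-(1 : ℝ) / 2) (1 / 2) := by
    intro s hs
    rw [mem_preimage, neg_div, mem_Icc, ← abs_le, abs_mul, abs_of_nonneg hα]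
    calc α * |s| ≤ α * (r / β) := mul_le_mul_of_nonneg_left (abs_le.mpr hs) hα
      _ ≤ 1 / 2 := by rw [mul_div_assoc', div_le_iff₀ hβ]; linarith
  rw [volume_slabEllipse_eq_setLIntegral, setLIntegral_eq_of_support_subset (hsupp.trans hsub),
    ← setLIntegral_eq_of_support_subset hsupp,
    setLIntegral_Icc_two_mul_sqrt_sq_sub_sq hβ (by positivity) (mul_div_cancel₀ r hβ.ne').le,
    mul_div_cancel₀ r hβ.ne', sub_self, sqrt_zero, div_self hr.ne', arcsin_one]
  congr 1
  ring

theorem volume_slabEllipse_of_lt {α β r : ℝ} (hα : 0 < α) (hβ : 0 < β) (hr : 0 < r)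
    (h : β < 2 * α * r) :
    volume (slabEllipse α β r) = ENNReal.ofReal
      (r / α * √(1 - β ^ 2 / (4 * α ^ 2 * r ^ 2)) + 2 * r ^ 2 / β * arcsin (β / (2 * α * r))) := by
  rw [volume_slabEllipse_eq_setLIntegral, preimage_const_mul_Icc₀ _ _ hα, neg_div, neg_div,
    setLIntegral_Icc_two_mul_sqrt_sq_sub_sq hβ (by positivity) ?_]
  · have hsq : r ^ 2 - (β * (1 / 2 / α)) ^ 2 = r ^ 2 * (1 - β ^ 2 / (4 * α ^ 2 * r ^ 2)) := by
      field_simp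
      ring
    rw [hsq, sqrt_mul (sq_nonneg r), sqrt_sq hr.le]
    congr 1
    field_simp
  · rw [← mul_div_assoc, div_le_iff₀ hα]
    linarith

theorem volume_slabEllipse_one_zero {r : ℝ} (hr : 0 ≤ r) :
    volume (slabEllipse 1 0 r) = ENNReal.ofReal (2 * r) := by
  norm_num [volume_slabEllipse_eq_setLIntegral, sqrt_sq hr]

theorem le_one_div_sqrt_iff_two_mul_mul_le_sqrt {α r : ℝ} (hα₀ : 0 ≤ α) (hα₁ : α ≤ 1)
    (hr : 0 ≤ r) : α ≤ 1 / √(1 + 4 * r ^ 2) ↔ 2 * α * r ≤ √(1 - α ^ 2) := by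
  rw [le_div_iff₀ (by positivity), ← sqrt_sq hα₀, ← sqrt_mul (sq_nonneg _), sqrt_le_iff,
    sqrt_sq hα₀, le_sqrt (by positivity) (by nlinarith)]
  constructor
  · intro h
    nlinarith [h.2]
  · intro h
    constructor <;> nlinarith

/-- The area of the central section of the cylinder
`Z = [-1/2,1/2] × r·B₂² ⊂ ℝ³` orthogonal to `(√(1-α²), α, 0)`, computed via any
linear isometric parametrization `φ` of the hyperplane by `ℝ²`. -/
theorem cylinder_3d_section_area (r α : ℝ) (hr : 0 < r) (hα : α ∈ Set.Icc (0:ℝ) 1)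
    (φ : EuclideanSpace ℝ (Fin 2) →ₗᵢ[ℝ] EuclideanSpace ℝ (Fin 3))
    (hφ : Set.range φ =
      {x : EuclideanSpace ℝ (Fin 3) | Real.sqrt (1 - α^2) * x 0 + α * x 1 = 0}) :
    volume (φ ⁻¹'
        {x : EuclideanSpace ℝ (Fin 3) |
          x 0 ∈ Set.Icc (-(1:ℝ)/2) (1/2) ∧ (x 1)^2 + (x 2)^2 ≤ r^2}) =
      ENNReal.ofReal
        (if α ≤ 1 / Real.sqrt (1 + 4 * r^2) then
          Real.pi * r * (r / Real.sqrt (1 - α^2))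
        else if α < 1 then
          r / α * Real.sqrt (1 - (1 - α^2) / (4 * α^2 * r^2)) +
            2 * r^2 / Real.sqrt (1 - α^2) *
              Real.arcsin (Real.sqrt (1 - α^2) / (2 * α * r))
        else 2 * r) := by
  obtain ⟨hα₀, hα₁⟩ := hα
  have hcond := le_one_div_sqrt_iff_two_mul_mul_le_sqrt hα₀ hα₁ hr.le
  set β := √(1 - α ^ 2) with hβ
  have hβsq : β ^ 2 = 1 - α ^ 2 := sq_sqrt (by nlinarith)
  have hαβ : α ^ 2 + β ^ 2 = 1 := by linarith
  rw [LinearIsometry.volume_preimage_eq_of_range_eq (hφ.trans (range_sectionIsometry α β hαβ).symm),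
    volume_preimage_sectionIsometry, ← hβsq]
  rcases hα₁.lt_or_eq with hlt | rfl
  · have hβpos : 0 < β := sqrt_pos.mpr (by nlinarith)
    by_cases hle : 2 * α * r ≤ β
    · rw [if_pos (hcond.mpr hle)]
      exact volume_slabEllipse_of_le hα₀ hβpos hr hle
    · rw [if_neg (mt hcond.mp hle), if_pos hlt]
      exact volume_slabEllipse_of_lt (by nlinarith) hβpos hr (not_le.mp hle)
  · have hβzero : β = 0 := by simp [hβ]
    rw [if_neg (mt hcond.mp (by rw [hβzero]; linarith)), if_neg (lt_irrefl 1), hβzero]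
    exact volume_slabEllipse_one_zero hr.le
end

section
/- Let r > 0, α* := 1/√(1+4r²), and let A be the section-area function of the 3-dimensional cylinder Z = [-1/2,1/2] × r·B₂² as in Lemma (3D cylinder formula). For α ∈ (α*, 1), the equation A'(α) = 0 is equivalent, under the substitution x = √(1-α²)/(2αr) (equivalently α = 1/√(1+4r²x²)), to the equation arcsin(x)/x = (1 + 8r²x²)·√(1-x²) for x ∈ (0,1). -/
open Real Set Topology

/-!
Substitute `x = √(1 - α²) / (2αr)`. Then `1 / α = √(1 + 4r²x²)` and `2r² / √(1 - α²) = r / (αx)`,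
so `A α = r √(1 + 4r²x²) (√(1 - x²) + arcsin x / x)`. The substitution has nonvanishing derivative
`-1 / (2α²r√(1 - α²))`, so `A'(α) = 0` iff the derivative in `x` vanishes, and that derivative is
`r ((1 + 8r²x²) √(1 - x²) - arcsin x / x) / (x √(1 + 4r²x²))`.
-/

noncomputable def cylinderSectionArea (r x : ℝ) : ℝ :=
  r * √(1 + 4 * r ^ 2 * x ^ 2) * (√(1 - x ^ 2) + arcsin x / x)

lemma hasDerivAt_sqrt_one_sub_sq_add_arcsin_div {x : ℝ} (hx₀ : 0 < x) (hx₁ : x < 1) :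
    HasDerivAt (fun y ↦ √(1 - y ^ 2) + arcsin y / y)
      ((√(1 - x ^ 2) - arcsin x / x) / x) x := by
  have hpos : 0 < 1 - x ^ 2 := by nlinarith
  have hsq : √(1 - x ^ 2) ^ 2 = 1 - x ^ 2 := sq_sqrt hpos.le
  have hroot := ((hasDerivAt_pow 2 x).const_sub 1).sqrt hpos.ne'
  have harc := (hasDerivAt_arcsin (by linarith) hx₁.ne).div (hasDerivAt_id x) hx₀.ne'
  refine (hroot.add harc).congr_deriv ?_
  simp only [id, Nat.cast_ofNat]
  field_simp
  linear_combination (-x) * hsq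

lemma hasDerivAt_cylinderSectionArea {r x : ℝ} (hx₀ : 0 < x) (hx₁ : x < 1) :
    HasDerivAt (cylinderSectionArea r)
      (r * ((1 + 8 * r ^ 2 * x ^ 2) * √(1 - x ^ 2) - arcsin x / x) /
        (x * √(1 + 4 * r ^ 2 * x ^ 2))) x := by
  have hpos : 0 < 1 + 4 * r ^ 2 * x ^ 2 := by positivity
  have hsq : √(1 + 4 * r ^ 2 * x ^ 2) ^ 2 = 1 + 4 * r ^ 2 * x ^ 2 := sq_sqrt hpos.le
  have hu : 0 < √(1 + 4 * r ^ 2 * x ^ 2) := sqrt_pos.mpr hpos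
  have hroot := ((((hasDerivAt_pow 2 x).const_mul (4 * r ^ 2)).const_add 1).sqrt hpos.ne').const_mul r
  refine (hroot.mul (hasDerivAt_sqrt_one_sub_sq_add_arcsin_div hx₀ hx₁)).congr_deriv ?_
  simp only [Nat.cast_ofNat, Nat.add_one_sub_one, pow_one]
  generalize √(1 + 4 * r ^ 2 * x ^ 2) = u at hsq hu ⊢
  field_simp
  linear_combination r * (x * √(1 - x ^ 2) - arcsin x) * hsq

lemma hasDerivAt_sqrt_one_sub_sq_div {r α : ℝ} (hr : r ≠ 0) (hα₀ : 0 < α) (hα₁ : α < 1) :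
    HasDerivAt (fun a ↦ √(1 - a ^ 2) / (2 * a * r)) (-1 / (2 * α ^ 2 * r * √(1 - α ^ 2))) α := by
  have hpos : 0 < 1 - α ^ 2 := by nlinarith
  have hsq : √(1 - α ^ 2) ^ 2 = 1 - α ^ 2 := sq_sqrt hpos.le
  have h := (((hasDerivAt_pow 2 α).const_sub 1).sqrt hpos.ne').div
    (((hasDerivAt_id α).const_mul 2).mul_const r) (by simp [hr, hα₀.ne'])
  refine h.congr_deriv ?_
  simp only [id, Nat.cast_ofNat]
  field_simp
  linear_combination (-1) * hsq

lemma cylinderSectionArea_sqrt_one_sub_sq_div {r α : ℝ} (hr : r ≠ 0) (hα₀ : 0 < α) (hα₁ : α < 1) :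
    cylinderSectionArea r (√(1 - α ^ 2) / (2 * α * r)) =
      r / α * √(1 - (1 - α ^ 2) / (4 * α ^ 2 * r ^ 2)) +
        2 * r ^ 2 / √(1 - α ^ 2) * arcsin (√(1 - α ^ 2) / (2 * α * r)) := by
  have hpos : 0 < 1 - α ^ 2 := by nlinarith
  have hsq : (√(1 - α ^ 2) / (2 * α * r)) ^ 2 = (1 - α ^ 2) / (4 * α ^ 2 * r ^ 2) := by
    rw [div_pow, sq_sqrt hpos.le]; ring
  have hinv : 1 + 4 * r ^ 2 * (1 - α ^ 2) / (4 * α ^ 2 * r ^ 2) = (1 / α) ^ 2 := by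
    field_simp; ring
  rw [cylinderSectionArea, hsq, ← mul_div_assoc, hinv, sqrt_sq (by positivity)]
  field_simp

lemma sqrt_one_sub_sq_div_mem_Ioo {r α : ℝ} (hr : 0 < r)
    (hα : α ∈ Ioo (1 / √(1 + 4 * r ^ 2)) 1) :
    √(1 - α ^ 2) / (2 * α * r) ∈ Ioo 0 1 := by
  obtain ⟨hlow, hα₁⟩ := hα
  have hα₀ : 0 < α := lt_trans (by positivity) hlow
  have hpos : 0 < 1 - α ^ 2 := by nlinarith
  have hlow' : 1 < α * √(1 + 4 * r ^ 2) := by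
    rwa [div_lt_iff₀ (by positivity)] at hlow
  have hsq : 1 < α ^ 2 * (1 + 4 * r ^ 2) := by
    have := pow_lt_pow_left₀ hlow' zero_le_one two_ne_zero
    rwa [one_pow, mul_pow, sq_sqrt (by positivity)] at this
  refine ⟨by positivity, ?_⟩
  rw [div_lt_one (by positivity), sqrt_lt' (by positivity)]
  nlinarith

/-- For `α ∈ (α*, 1)` the vanishing of the derivative of the section-area function
`A` of the 3-dimensional cylinder is equivalent to `arcsin x / x = (1+8r²x²)√(1-x²)`
with `x = √(1-α²)/(2αr)`. -/
theorem deriv_zero_iff_equation (r : ℝ) (hr : 0 < r)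
    (A : ℝ → ℝ)
    (hA : ∀ α : ℝ, α ∈ Set.Ioo (1 / Real.sqrt (1 + 4 * r^2)) 1 →
      A α = r / α * Real.sqrt (1 - (1 - α^2) / (4 * α^2 * r^2)) +
        2 * r^2 / Real.sqrt (1 - α^2) *
          Real.arcsin (Real.sqrt (1 - α^2) / (2 * α * r)))
    (α : ℝ) (hα : α ∈ Set.Ioo (1 / Real.sqrt (1 + 4 * r^2)) 1) :
    deriv A α = 0 ↔
      (let x := Real.sqrt (1 - α^2) / (2 * α * r);
        Real.arcsin x / x = (1 + 8 * r^2 * x^2) * Real.sqrt (1 - x^2)) := by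
  have hα₀ : 0 < α := lt_trans (by positivity) hα.1
  obtain ⟨hx₀, hx₁⟩ := sqrt_one_sub_sq_div_mem_Ioo hr hα
  have hA_eq : A =ᶠ[𝓝 α] cylinderSectionArea r ∘ fun a ↦ √(1 - a ^ 2) / (2 * a * r) := by
    filter_upwards [Ioo_mem_nhds hα.1 hα.2] with a ha
    exact (hA a ha).trans
      (cylinderSectionArea_sqrt_one_sub_sq_div hr.ne' (lt_trans (by positivity) ha.1) ha.2).symm
  have hderiv := ((hasDerivAt_cylinderSectionArea hx₀ hx₁).comp α
    (hasDerivAt_sqrt_one_sub_sq_div hr.ne' hα₀ hα.2)).congr_of_eventuallyEq hA_eq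
  have hs : 0 < √(1 - α ^ 2) := sqrt_pos.mpr (by nlinarith [hα.2])
  rw [hderiv.deriv, mul_eq_zero, or_iff_left (by positivity), div_eq_zero_iff,
    or_iff_left (by positivity), mul_eq_zero, or_iff_right hr.ne', sub_eq_zero, eq_comm]
end

section
/- For r > 0, the equation arcsin(x)/x = (1 + 8r²x²)·√(1-x²) has a solution x ∈ (0,1) if and only if r > 1/(2√3). -/
/-!
Put `x = sin θ` with `θ ∈ (0, π/2)`. Since `arcsin x = θ` and `√(1 - x²) = cos θ`, the equation
becomes `θ - sin θ cos θ = k sin³θ cos θ` with `k = 8r²`. The left side is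
`(2/3) sin³θ cos θ + R θ`, where `R' = (8/3) sin⁴` gives `0 < R θ ≤ (8/15) θ⁵`. So a solution forces
`k > 2/3`; conversely, for `k > 2/3` the difference `R θ - (k - 2/3) sin³θ cos θ` is negative for
small `θ` (it is `O(θ⁵)` against `θ³`) and equals `π/2` at `θ = π/2`, so it vanishes in between.
The threshold `8r² = 2/3` is `r = 1/(2√3)`.
-/

open Real Set

noncomputable def sinCosRemainder (θ : ℝ) : ℝ :=
  θ - sin θ * cos θ - 2 / 3 * (sin θ ^ 3 * cos θ)

lemma hasDerivAt_sinCosRemainder (θ : ℝ) :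
    HasDerivAt sinCosRemainder (8 / 3 * sin θ ^ 4) θ := by
  have h := ((hasDerivAt_id θ).sub ((hasDerivAt_sin θ).mul (hasDerivAt_cos θ))).sub
    ((((hasDerivAt_sin θ).pow 3).mul (hasDerivAt_cos θ)).const_mul (2 / 3 : ℝ))
  refine h.congr_deriv ?_
  simp only [Pi.pow_apply, Nat.cast_ofNat]
  linear_combination (-1 - 2 * sin θ ^ 2) * cos_sq_add_sin_sq θ

lemma continuous_sinCosRemainder : Continuous sinCosRemainder :=
  continuous_iff_continuousAt.2 fun θ => (hasDerivAt_sinCosRemainder θ).continuousAt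

lemma sinCosRemainder_pos {θ : ℝ} (h₀ : 0 < θ) (hπ : θ ≤ π) : 0 < sinCosRemainder θ := by
  have hmono : StrictMonoOn sinCosRemainder (Icc 0 π) := by
    refine strictMonoOn_of_deriv_pos (convex_Icc 0 π) continuous_sinCosRemainder.continuousOn
      fun t ht => ?_
    rw [interior_Icc] at ht
    rw [(hasDerivAt_sinCosRemainder t).deriv]
    have := sin_pos_of_pos_of_lt_pi ht.1 ht.2
    positivity
  simpa [sinCosRemainder] using hmono ⟨le_rfl, pi_pos.le⟩ ⟨h₀.le, hπ⟩ h₀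

lemma sinCosRemainder_le {θ : ℝ} (h₀ : 0 ≤ θ) : sinCosRemainder θ ≤ 8 / 15 * θ ^ 5 := by
  set f : ℝ → ℝ := fun t => 8 / 15 * t ^ 5 - sinCosRemainder t
  have hf : ∀ t, HasDerivAt f (8 / 3 * (t ^ 4 - sin t ^ 4)) t := fun t =>
    (((hasDerivAt_pow 5 t).const_mul (8 / 15 : ℝ)).sub (hasDerivAt_sinCosRemainder t)).congr_deriv
      (by push_cast; ring)
  have hmono : MonotoneOn f (Ici 0) := by
    refine monotoneOn_of_hasDerivWithinAt_nonneg (convex_Ici 0)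
      (fun t _ => (hf t).continuousAt.continuousWithinAt)
      (fun t _ => (hf t).hasDerivWithinAt) fun t _ => ?_
    have hsq : sin t ^ 2 ≤ t ^ 2 := sin_sq_le_sq
    have h4 : sin t ^ 4 ≤ t ^ 4 := by
      simpa only [← pow_mul] using pow_le_pow_left₀ (sq_nonneg _) hsq 2
    linarith
  simpa [f, sinCosRemainder] using hmono self_mem_Ici h₀ h₀

lemma sin_pow_three_mul_cos_gt {θ : ℝ} (h₀ : 0 < θ) (h₁ : θ ≤ 1) :
    θ ^ 3 / 4 < sin θ ^ 3 * cos θ := by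
  have hθ2 : θ ^ 2 ≤ 1 := pow_le_one₀ h₀.le h₁
  have hsin : 5 / 6 * θ < sin θ := by nlinarith [sin_gt_sub_cube h₀]
  have hcos : 1 / 2 ≤ cos θ := by nlinarith [one_sub_sq_div_two_le_cos (x := θ)]
  have hsin3 : (5 / 6 * θ) ^ 3 < sin θ ^ 3 := by gcongr
  nlinarith [pow_pos h₀ 3]

lemma exists_sinCosRemainder_eq_iff (ε : ℝ) :
    (∃ θ ∈ Ioo 0 (π / 2), sinCosRemainder θ = ε * (sin θ ^ 3 * cos θ)) ↔ 0 < ε := by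
  constructor
  · rintro ⟨θ, ⟨h₀, hπ⟩, hθ⟩
    have hsc : 0 < sin θ ^ 3 * cos θ := by
      have := sin_pos_of_pos_of_lt_pi h₀ (by linarith [pi_pos])
      have := cos_pos_of_mem_Ioo ⟨by linarith, hπ⟩
      positivity
    exact pos_of_mul_pos_left (hθ ▸ sinCosRemainder_pos h₀ (by linarith [pi_pos])) hsc.le
  · intro hε
    set f : ℝ → ℝ := fun θ => sinCosRemainder θ - ε * (sin θ ^ 3 * cos θ)
    set θ₁ := min 1 (ε / 4)
    have hθ₁ : 0 < θ₁ := lt_min one_pos (by positivity)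
    have hθ₁_le : θ₁ ≤ 1 := min_le_left _ _
    have hθ₁_lt : θ₁ < π / 2 := by linarith [pi_gt_three]
    -- `f θ₁ ≤ (8/15) θ₁⁵ - ε θ₁³/4 < 0` because `θ₁² ≤ θ₁ ≤ ε/4`.
    have hf₁ : f θ₁ < 0 := by
      have hsq : θ₁ ^ 2 ≤ ε / 4 := by nlinarith [min_le_right 1 (ε / 4)]
      have := mul_lt_mul_of_pos_left (sin_pow_three_mul_cos_gt hθ₁ hθ₁_le) hε
      nlinarith [sinCosRemainder_le hθ₁.le, pow_pos hθ₁ 3]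
    have hf₂ : 0 < f (π / 2) := by simp [f, sinCosRemainder, pi_pos]
    have hcont : ContinuousOn f (Icc θ₁ (π / 2)) := by
      simp only [f]
      exact (continuous_sinCosRemainder.sub (by fun_prop)).continuousOn
    obtain ⟨θ, ⟨hθ₁θ, hθπ⟩, hθ⟩ := intermediate_value_Ioo hθ₁_lt.le hcont ⟨hf₁, hf₂⟩
    exact ⟨θ, ⟨hθ₁.trans hθ₁θ, hθπ⟩, sub_eq_zero.1 hθ⟩

lemma exists_mem_Ioo_zero_one_iff_sin {p : ℝ → Prop} :
    (∃ x ∈ Ioo (0 : ℝ) 1, p x) ↔ ∃ θ ∈ Ioo 0 (π / 2), p (sin θ) := by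
  constructor
  · rintro ⟨x, ⟨h₀, h₁⟩, hx⟩
    exact ⟨arcsin x, ⟨arcsin_pos.2 h₀, arcsin_lt_pi_div_two.2 h₁⟩,
      (sin_arcsin (by linarith) h₁.le).symm ▸ hx⟩
  · rintro ⟨θ, ⟨h₀, hπ⟩, hθ⟩
    refine ⟨sin θ, ⟨sin_pos_of_pos_of_lt_pi h₀ (by linarith [pi_pos]), ?_⟩, hθ⟩
    simpa using sin_lt_sin_of_lt_of_le_pi_div_two (by linarith [pi_pos]) le_rfl hπ

lemma arcsin_sin_div_sin_eq_iff {θ : ℝ} (k : ℝ) (h₁ : -(π / 2) ≤ θ) (h₂ : θ ≤ π / 2)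
    (hs : sin θ ≠ 0) :
    arcsin (sin θ) / sin θ = (1 + k * sin θ ^ 2) * √(1 - sin θ ^ 2) ↔
      sinCosRemainder θ = (k - 2 / 3) * (sin θ ^ 3 * cos θ) := by
  rw [arcsin_sin h₁ h₂, ← cos_eq_sqrt_one_sub_sin_sq h₁ h₂, div_eq_iff hs, sinCosRemainder]
  constructor <;> intro h <;> linear_combination h

lemma one_div_two_mul_sqrt_three_lt_iff {r : ℝ} (hr : 0 ≤ r) :
    1 / (2 * √3) < r ↔ 0 < 8 * r ^ 2 - 2 / 3 := by
  have hsq : (1 / (2 * √3)) ^ 2 = 1 / 12 := by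
    rw [div_pow, mul_pow, sq_sqrt (by norm_num : (0 : ℝ) ≤ 3)]
    norm_num
  rw [← pow_lt_pow_iff_left₀ (by positivity) hr two_ne_zero, hsq]
  constructor <;> intro h <;> linarith

theorem critical_radius (r : ℝ) (hr : 0 < r) :
    (∃ x ∈ Set.Ioo (0:ℝ) 1,
        Real.arcsin x / x = (1 + 8 * r^2 * x^2) * Real.sqrt (1 - x^2)) ↔
      r > 1 / (2 * Real.sqrt 3) := by
  rw [gt_iff_lt, one_div_two_mul_sqrt_three_lt_iff hr.le,
    ← exists_sinCosRemainder_eq_iff, exists_mem_Ioo_zero_one_iff_sin]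
  refine exists_congr fun θ => and_congr_right fun ⟨h₀, hπ⟩ => ?_
  exact arcsin_sin_div_sin_eq_iff (8 * r ^ 2) (by linarith [pi_pos]) hπ.le
    (sin_pos_of_pos_of_lt_pi h₀ (by linarith [pi_pos])).ne'
end

section
/- Let (X, μ) be a measure space and h, g : X → [0,∞) measurable functions with finite distribution functions H(y) := μ{x : h(x) > y} and G(y) := μ{x : g(x) > y} for all y > 0. Suppose there exists y₀ > 0 such that G(y) ≤ H(y) for all 0 < y < y₀ and G(y) ≥ H(y) for all y > y₀, and suppose there exists p₀ > 0 with ∫ h^{p₀} dμ = ∫ g^{p₀} dμ (both finite). Then for every p > p₀ for which both integrals ∫ h^p dμ and ∫ g^p dμ are finite, ∫ h^p dμ ≤ ∫ g^p dμ. -/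
/-!
By the layer-cake formula, `∫ h^p dμ = p ∫₀^∞ H(t) t^(p-1) dt`, and likewise for `g`.
With `c = y₀^(p-p₀)` the weights `t^(p-1)` and `c t^(p₀-1)` cross exactly at `y₀`, in the
opposite direction to `H` and `G`; so pointwise `(H - G)(t) (t^(p-1) - c t^(p₀-1)) ≤ 0`.
Integrating, and using that the `p₀`-moments agree and are finite, gives the claim.
-/

open MeasureTheory Set
open scoped ENNReal

-- Mathlib's `mul_add_mul_le_mul_add_mul` needs cancellative addition, which `ℝ≥0∞` lacks.
lemma ENNReal.mul_add_mul_le_mul_add_mul {a b c d : ℝ≥0∞} (hab : a ≤ b) (hcd : c ≤ d) :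
    a * d + b * c ≤ a * c + b * d := by
  obtain ⟨e, rfl⟩ := exists_add_of_le hcd
  calc a * (c + e) + b * c = a * c + b * c + a * e := by ring
    _ ≤ a * c + b * c + b * e := by gcongr
    _ = a * c + b * (c + e) := by ring

theorem lintegral_mul_le_of_single_crossing {α : Type*} [MeasurableSpace α] [LinearOrder α]
    {ν : Measure α} {F G u v : α → ℝ≥0∞} (y₀ : α)
    (hGF : ∀ᵐ t ∂ν, t < y₀ → G t ≤ F t) (hFG : ∀ᵐ t ∂ν, y₀ < t → F t ≤ G t)
    (huv : ∀ᵐ t ∂ν, t ≤ y₀ → u t ≤ v t) (hvu : ∀ᵐ t ∂ν, y₀ ≤ t → v t ≤ u t)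
    (hFv : AEMeasurable (fun t ↦ F t * v t) ν)
    (heq : ∫⁻ t, F t * v t ∂ν = ∫⁻ t, G t * v t ∂ν) (hfin : ∫⁻ t, F t * v t ∂ν ≠ ∞) :
    ∫⁻ t, F t * u t ∂ν ≤ ∫⁻ t, G t * u t ∂ν := by
  have hpointwise : ∀ᵐ t ∂ν, F t * u t + G t * v t ≤ G t * u t + F t * v t := by
    filter_upwards [hGF, hFG, huv, hvu] with t hGFt hFGt huvt hvut
    rcases lt_trichotomy t y₀ with ht | rfl | ht
    · rw [add_comm]
      exact ENNReal.mul_add_mul_le_mul_add_mul (hGFt ht) (huvt ht.le)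
    · rw [le_antisymm (huvt le_rfl) (hvut le_rfl), add_comm]
    · rw [add_comm (G t * u t)]
      exact ENNReal.mul_add_mul_le_mul_add_mul (hFGt ht) (hvut ht.le)
  have hsum : ∫⁻ t, F t * u t ∂ν + ∫⁻ t, F t * v t ∂ν
      ≤ ∫⁻ t, G t * u t ∂ν + ∫⁻ t, F t * v t ∂ν := by
    calc ∫⁻ t, F t * u t ∂ν + ∫⁻ t, F t * v t ∂ν
        = ∫⁻ t, F t * u t ∂ν + ∫⁻ t, G t * v t ∂ν := by rw [heq]
      _ ≤ ∫⁻ t, F t * u t + G t * v t ∂ν := le_lintegral_add _ _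
      _ ≤ ∫⁻ t, G t * u t + F t * v t ∂ν := lintegral_mono_ae hpointwise
      _ = ∫⁻ t, G t * u t ∂ν + ∫⁻ t, F t * v t ∂ν := lintegral_add_right' _ hFv
  exact (ENNReal.add_le_add_iff_right hfin).1 hsum

namespace Real

variable {t y p q : ℝ}

lemma rpow_sub_one_eq_rpow_mul_rpow_sub_one (ht : 0 < t) (p q : ℝ) :
    t ^ (p - 1) = t ^ (p - q) * t ^ (q - 1) := by
  rw [← rpow_add ht]
  ring_nf

lemma rpow_sub_one_le_rpow_mul_rpow_sub_one (ht : 0 < t) (hty : t ≤ y) (hqp : q ≤ p) :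
    t ^ (p - 1) ≤ y ^ (p - q) * t ^ (q - 1) := by
  rw [rpow_sub_one_eq_rpow_mul_rpow_sub_one ht p q]
  gcongr

lemma rpow_mul_rpow_sub_one_le_rpow_sub_one (hy : 0 ≤ y) (hyt : y ≤ t) (ht : 0 < t)
    (hqp : q ≤ p) : y ^ (p - q) * t ^ (q - 1) ≤ t ^ (p - 1) := by
  rw [rpow_sub_one_eq_rpow_mul_rpow_sub_one ht p q]
  gcongr

end Real

theorem setLIntegral_mul_rpow_le_of_single_crossing {F G : ℝ → ℝ≥0∞} (hF : Measurable F)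
    {y₀ q p : ℝ} (hy₀ : 0 ≤ y₀) (hqp : q ≤ p)
    (hGF : ∀ t, 0 < t → t < y₀ → G t ≤ F t) (hFG : ∀ t, y₀ < t → F t ≤ G t)
    (heq : ∫⁻ t in Ioi 0, F t * ENNReal.ofReal (t ^ (q - 1))
      = ∫⁻ t in Ioi 0, G t * ENNReal.ofReal (t ^ (q - 1)))
    (hfin : ∫⁻ t in Ioi 0, F t * ENNReal.ofReal (t ^ (q - 1)) ≠ ∞) :
    ∫⁻ t in Ioi 0, F t * ENNReal.ofReal (t ^ (p - 1))
      ≤ ∫⁻ t in Ioi 0, G t * ENNReal.ofReal (t ^ (p - 1)) := by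
  set c := ENNReal.ofReal (y₀ ^ (p - q))
  have hpos : ∀ᵐ t ∂volume.restrict (Ioi (0 : ℝ)), 0 < t := ae_restrict_mem measurableSet_Ioi
  have hc_mul : ∀ f : ℝ → ℝ≥0∞,
      ∫⁻ t in Ioi 0, f t * (c * ENNReal.ofReal (t ^ (q - 1)))
        = c * ∫⁻ t in Ioi 0, f t * ENNReal.ofReal (t ^ (q - 1)) := fun f ↦ by
    simp_rw [mul_left_comm _ c]
    exact lintegral_const_mul' c _ ENNReal.ofReal_ne_top
  refine lintegral_mul_le_of_single_crossing (v := fun t ↦ c * ENNReal.ofReal (t ^ (q - 1))) y₀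
    (hpos.mono fun t ht ↦ hGF t ht) (.of_forall hFG) ?_ ?_ (by fun_prop) ?_ ?_
  · filter_upwards [hpos] with t ht hty
    rw [← ENNReal.ofReal_mul (by positivity)]
    exact ENNReal.ofReal_le_ofReal (Real.rpow_sub_one_le_rpow_mul_rpow_sub_one ht hty hqp)
  · filter_upwards [hpos] with t ht hyt
    rw [← ENNReal.ofReal_mul (by positivity)]
    exact ENNReal.ofReal_le_ofReal (Real.rpow_mul_rpow_sub_one_le_rpow_sub_one hy₀ hyt ht hqp)
  · rw [hc_mul F, hc_mul G, heq]
  · rw [hc_mul F]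
    exact ENNReal.mul_ne_top ENNReal.ofReal_ne_top hfin

theorem nazarov_podkorytov_general {X : Type*} [MeasurableSpace X] (μ : Measure X)
    (h g : X → ℝ) (hh : Measurable h) (hg : Measurable g)
    (h0 : ∀ x, 0 ≤ h x) (g0 : ∀ x, 0 ≤ g x)
    (y₀ : ℝ) (hy₀ : 0 < y₀)
    (hsign₁ : ∀ y : ℝ, 0 < y → y < y₀ → μ {x | g x > y} ≤ μ {x | h x > y})
    (hsign₂ : ∀ y : ℝ, y₀ < y → μ {x | h x > y} ≤ μ {x | g x > y})
    (p₀ : ℝ) (hp₀ : 0 < p₀)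
    (heq : ∫⁻ x, ENNReal.ofReal (h x ^ p₀) ∂μ = ∫⁻ x, ENNReal.ofReal (g x ^ p₀) ∂μ)
    (hfin₀ : ∫⁻ x, ENNReal.ofReal (h x ^ p₀) ∂μ < ⊤) :
    ∀ p : ℝ, p₀ < p →
      ∫⁻ x, ENNReal.ofReal (h x ^ p) ∂μ < ⊤ →
      ∫⁻ x, ENNReal.ofReal (g x ^ p) ∂μ < ⊤ →
      ∫⁻ x, ENNReal.ofReal (h x ^ p) ∂μ ≤ ∫⁻ x, ENNReal.ofReal (g x ^ p) ∂μ := by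
  intro p hpp _ _
  have layer_cake : ∀ f : X → ℝ, Measurable f → (∀ x, 0 ≤ f x) → ∀ r : ℝ, 0 < r →
      ∫⁻ x, ENNReal.ofReal (f x ^ r) ∂μ
        = ENNReal.ofReal r * ∫⁻ t in Ioi 0, μ {x | t < f x} * ENNReal.ofReal (t ^ (r - 1)) :=
    fun f hf hf0 r hr ↦
      lintegral_rpow_eq_lintegral_meas_lt_mul μ (.of_forall hf0) hf.aemeasurable hr
  have hH : Measurable fun t : ℝ ↦ μ {x | t < h x} :=
    Antitone.measurable fun s t hst ↦ measure_mono fun x hx ↦ hst.trans_lt hx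
  have hp₀_ne : ENNReal.ofReal p₀ ≠ 0 := ENNReal.ofReal_ne_zero_iff.2 hp₀
  rw [layer_cake h hh h0 p₀ hp₀, layer_cake g hg g0 p₀ hp₀] at heq
  rw [layer_cake h hh h0 p₀ hp₀] at hfin₀
  rw [layer_cake h hh h0 p (hp₀.trans hpp), layer_cake g hg g0 p (hp₀.trans hpp)]
  gcongr ENNReal.ofReal p * ?_
  exact setLIntegral_mul_rpow_le_of_single_crossing hH hy₀.le hpp.le hsign₁ hsign₂
    ((ENNReal.mul_right_inj hp₀_ne ENNReal.ofReal_ne_top).1 heq)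
    (ENNReal.lt_top_of_mul_ne_top_right hfin₀.ne hp₀_ne).ne

/-- The Nazarov–Podkorytov lemma. -/
theorem nazarov_podkorytov {X : Type*} [MeasurableSpace X] (μ : Measure X)
    (h g : X → ℝ) (hh : Measurable h) (hg : Measurable g)
    (h0 : ∀ x, 0 ≤ h x) (g0 : ∀ x, 0 ≤ g x)
    (Hfin : ∀ y : ℝ, 0 < y → μ {x | h x > y} < ⊤)
    (Gfin : ∀ y : ℝ, 0 < y → μ {x | g x > y} < ⊤)
    (y₀ : ℝ) (hy₀ : 0 < y₀)
    (hsign₁ : ∀ y : ℝ, 0 < y → y < y₀ → μ {x | g x > y} ≤ μ {x | h x > y})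
    (hsign₂ : ∀ y : ℝ, y₀ < y → μ {x | h x > y} ≤ μ {x | g x > y})
    (p₀ : ℝ) (hp₀ : 0 < p₀)
    (heq : ∫⁻ x, ENNReal.ofReal (h x ^ p₀) ∂μ = ∫⁻ x, ENNReal.ofReal (g x ^ p₀) ∂μ)
    (hfin₀ : ∫⁻ x, ENNReal.ofReal (h x ^ p₀) ∂μ < ⊤) :
    ∀ p : ℝ, p₀ < p →
      ∫⁻ x, ENNReal.ofReal (h x ^ p) ∂μ < ⊤ →
      ∫⁻ x, ENNReal.ofReal (g x ^ p) ∂μ < ⊤ →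
      ∫⁻ x, ENNReal.ofReal (h x ^ p) ∂μ ≤ ∫⁻ x, ENNReal.ofReal (g x ^ p) ∂μ :=
  nazarov_podkorytov_general μ h g hh hg h0 g0 y₀ hy₀ hsign₁ hsign₂ p₀ hp₀ heq hfin₀
end
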